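/- If S and T are bounded operators on a complex Hilbert space and at least one of S, T is accretive-dissipative, then ω(ST) ≤ 2√2 · ω(S) ω(T). -/

import Mathlib

open scoped InnerProductSpace
open ContinuousLinearMap

variable {H : Type*} [NormedAddCommGroup H] [InnerProductSpace ℂ H] [CompleteSpace H]

/-- The numerical radius of a bounded operator. -/
noncomputable def numRadius (T : H →L[ℂ] H) : ℝ :=
  ⨆ x : {x : H // ‖x‖ = 1}, ‖⟪T x.1, x.1⟫_ℂ‖

/-- The absolute value |A| = (A*A)^(1/2). -/
noncomputable def opAbs (A : H →L[ℂ] H) : H →L[ℂ] H := CFC.sqrt (adjoint A * A)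

/-- Real part of the Cartesian decomposition. -/
noncomputable def reP (T : H →L[ℂ] H) : H →L[ℂ] H := (2:ℂ)⁻¹ • (T + adjoint T)

/-- Imaginary part of the Cartesian decomposition. -/
noncomputable def imP (T : H →L[ℂ] H) : H →L[ℂ] H := (2*Complex.I:ℂ)⁻¹ • (T - adjoint T)

/-!
Bound `ω(ST) ≤ ‖S‖ ‖T‖` and estimate the two norms separately. Every operator satisfies
`‖T‖ ≤ 2 ω(T)`: its real and imaginary parts are self-adjoint, so their norms are the suprema of
their quadratic forms, which are `Re ⟪Tx, x⟫` and `-Im ⟪Tx, x⟫`. If `S = A + iB` with `A, B ≥ 0`,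
Cauchy–Schwarz for the positive forms of `A` and `B` gives
`|⟪Sx, y⟫| ≤ √(⟪(A+B)x, x⟫ ⟪(A+B)y, y⟫)`, while `⟪(A+B)x, x⟫ = Re ⟪Sx, x⟫ - Im ⟪Sx, x⟫ ≤ √2 |⟪Sx, x⟫|`;
hence `‖S‖ ≤ √2 ω(S)`.
-/

open ComplexStarModule RCLike

section

variable {𝕜 E : Type*} [RCLike 𝕜] [NormedAddCommGroup E] [InnerProductSpace 𝕜 E]

theorem ContinuousLinearMap.opNorm_le_of_isSymmetric_of_abs_re_inner_self_le {A : E →L[𝕜] E}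
    (hA : (A : E →ₗ[𝕜] E).IsSymmetric) {c : ℝ} (hc : 0 ≤ c)
    (h : ∀ x, |re ⟪A x, x⟫_𝕜| ≤ c * ‖x‖ ^ 2) : ‖A‖ ≤ c := by
  rw [A.norm_eq_iSup_rayleighQuotient hA]
  refine Real.iSup_le (fun x => ?_) hc
  rw [rayleighQuotient, reApplyInnerSelf_apply, abs_div, abs_sq]
  exact div_le_of_le_mul₀ (sq_nonneg _) hc (h x)

end

theorem Real.sqrt_mul_sqrt_add_sqrt_mul_sqrt_le {a b c d : ℝ} (ha : 0 ≤ a) (hb : 0 ≤ b)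
    (hc : 0 ≤ c) (hd : 0 ≤ d) : √a * √b + √c * √d ≤ √(a + c) * √(b + d) := by
  rw [← Real.sqrt_mul (add_nonneg ha hc) (b + d)]
  refine Real.le_sqrt_of_sq_le ?_
  nlinarith [Real.sq_sqrt ha, Real.sq_sqrt hb, Real.sq_sqrt hc, Real.sq_sqrt hd,
    sq_nonneg (√a * √d - √c * √b)]

theorem Complex.re_sub_im_le_sqrt_two_mul_norm (z : ℂ) : z.re - z.im ≤ √2 * ‖z‖ := by
  rw [← Real.sqrt_sq (norm_nonneg z), ← Real.sqrt_mul zero_le_two, Complex.sq_norm,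
    Complex.normSq_apply]
  exact Real.le_sqrt_of_sq_le (by nlinarith [sq_nonneg (z.re + z.im)])

section

variable {E : Type*} [NormedAddCommGroup E] [InnerProductSpace ℂ E]

theorem numRadius_nonneg (T : E →L[ℂ] E) : 0 ≤ numRadius T :=
  Real.iSup_nonneg fun _ => norm_nonneg _

theorem norm_inner_apply_self_le (T : E →L[ℂ] E) (x : E) : ‖⟪T x, x⟫_ℂ‖ ≤ ‖T‖ * ‖x‖ ^ 2 :=
  calc ‖⟪T x, x⟫_ℂ‖ ≤ ‖T x‖ * ‖x‖ := norm_inner_le_norm _ _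
    _ ≤ ‖T‖ * ‖x‖ * ‖x‖ := by gcongr; exact T.le_opNorm x
    _ = ‖T‖ * ‖x‖ ^ 2 := by ring

theorem numRadius_le_norm (T : E →L[ℂ] E) : numRadius T ≤ ‖T‖ :=
  Real.iSup_le (fun x => by simpa [x.2] using norm_inner_apply_self_le T x.1) (norm_nonneg T)

theorem norm_inner_apply_self_le_numRadius (T : E →L[ℂ] E) {x : E} (hx : ‖x‖ = 1) :
    ‖⟪T x, x⟫_ℂ‖ ≤ numRadius T :=
  le_ciSup (f := fun y : {y : E // ‖y‖ = 1} => ‖⟪T y, y⟫_ℂ‖)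
    ⟨‖T‖, by rintro _ ⟨y, rfl⟩; simpa [y.2] using norm_inner_apply_self_le T y.1⟩ ⟨x, hx⟩

theorem norm_inner_apply_self_le_numRadius_mul_sq (T : E →L[ℂ] E) (x : E) :
    ‖⟪T x, x⟫_ℂ‖ ≤ numRadius T * ‖x‖ ^ 2 := by
  rcases eq_or_ne x 0 with rfl | hx
  · simp
  have hr : 0 < ‖x‖ := norm_pos_iff.mpr hx
  have hu : ‖((‖x‖ : ℂ)⁻¹) • x‖ = 1 := by simp [norm_smul, hr.ne']
  have h := norm_inner_apply_self_le_numRadius T hu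
  simp only [map_smul, inner_smul_left, inner_smul_right, norm_mul, RCLike.norm_conj, norm_inv,
    Complex.norm_real, norm_norm] at h
  rwa [← mul_assoc, ← mul_inv, ← sq, inv_mul_le_iff₀ (by positivity), mul_comm] at h

end

section

variable {E : Type*} [NormedAddCommGroup E] [InnerProductSpace ℂ E] [CompleteSpace E]

theorem ContinuousLinearMap.IsPositive.norm_inner_le_sqrt_mul_sqrt
    {A : E →L[ℂ] E} (hA : A.IsPositive) (x y : E) :
    ‖⟪A x, y⟫_ℂ‖ ≤ √(⟪A x, x⟫_ℂ).re * √(⟪A y, y⟫_ℂ).re := by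
  obtain ⟨B, rfl⟩ := CStarAlgebra.nonneg_iff_eq_star_mul_self.mp ((nonneg_iff_isPositive A).mpr hA)
  have hB (u v : E) : ⟪(star B * B) u, v⟫_ℂ = ⟪B u, B v⟫_ℂ := adjoint_inner_left B v (B u)
  have hnorm (u : E) : (⟪B u, B u⟫_ℂ).re = ‖B u‖ ^ 2 :=
    inner_self_eq_norm_sq (𝕜 := ℂ) _
  simp only [hB, hnorm, Real.sqrt_sq (norm_nonneg _)]
  exact norm_inner_le_norm _ _

theorem reP_eq_realPart (T : E →L[ℂ] E) : reP T = ℜ T := by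
  rw [reP, realPart_apply_coe, star_eq_adjoint, ← Complex.coe_smul]
  norm_num

theorem imP_eq_imaginaryPart (T : E →L[ℂ] E) : imP T = ℑ T := by
  rw [imP, imaginaryPart_apply_coe, star_eq_adjoint, ← Complex.coe_smul, smul_smul, mul_inv,
    Complex.inv_I, mul_comm]
  norm_num

theorem re_inner_realPart_apply_self (T : E →L[ℂ] E) (x : E) :
    (⟪(ℜ T : E →L[ℂ] E) x, x⟫_ℂ).re = (⟪T x, x⟫_ℂ).re := by
  have h := Complex.add_conj ⟪T x, x⟫_ℂ
  rw [inner_conj_symm] at h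
  rw [← reP_eq_realPart, reP, smul_apply, add_apply, inner_smul_left, inner_add_left,
    adjoint_inner_left, h]
  simp

theorem re_inner_imaginaryPart_apply_self (T : E →L[ℂ] E) (x : E) :
    (⟪(ℑ T : E →L[ℂ] E) x, x⟫_ℂ).re = -(⟪T x, x⟫_ℂ).im := by
  have h := Complex.sub_conj ⟪T x, x⟫_ℂ
  rw [inner_conj_symm] at h
  rw [← imP_eq_imaginaryPart, imP, smul_apply, sub_apply, inner_smul_left, inner_sub_left,
    adjoint_inner_left, h]
  simp

theorem norm_le_two_mul_numRadius (T : E →L[ℂ] E) : ‖T‖ ≤ 2 * numRadius T := by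
  have hω := numRadius_nonneg T
  have hre : ‖(ℜ T : E →L[ℂ] E)‖ ≤ numRadius T :=
    opNorm_le_of_isSymmetric_of_abs_re_inner_self_le (ℜ T).2.isSymmetric hω fun x =>
      calc |re ⟪(ℜ T : E →L[ℂ] E) x, x⟫_ℂ| = |(⟪T x, x⟫_ℂ).re| :=
            congrArg abs (re_inner_realPart_apply_self T x)
        _ ≤ numRadius T * ‖x‖ ^ 2 :=
            (Complex.abs_re_le_norm _).trans (norm_inner_apply_self_le_numRadius_mul_sq T x)
  have him : ‖(ℑ T : E →L[ℂ] E)‖ ≤ numRadius T :=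
    opNorm_le_of_isSymmetric_of_abs_re_inner_self_le (ℑ T).2.isSymmetric hω fun x =>
      calc |re ⟪(ℑ T : E →L[ℂ] E) x, x⟫_ℂ| = |(⟪T x, x⟫_ℂ).im| :=
            (congrArg abs (re_inner_imaginaryPart_apply_self T x)).trans (abs_neg _)
        _ ≤ numRadius T * ‖x‖ ^ 2 :=
            (Complex.abs_im_le_norm _).trans (norm_inner_apply_self_le_numRadius_mul_sq T x)
  calc ‖T‖ = ‖(ℜ T : E →L[ℂ] E) + Complex.I • (ℑ T : E →L[ℂ] E)‖ := by
        rw [realPart_add_I_smul_imaginaryPart]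
    _ ≤ ‖(ℜ T : E →L[ℂ] E)‖ + ‖(ℑ T : E →L[ℂ] E)‖ := by
        simpa [norm_smul] using norm_add_le _ (Complex.I • (ℑ T : E →L[ℂ] E))
    _ ≤ 2 * numRadius T := by linarith

theorem norm_le_sqrt_two_mul_numRadius {S : E →L[ℂ] E} (hre : (ℜ S : E →L[ℂ] E).IsPositive)
    (him : (ℑ S : E →L[ℂ] E).IsPositive) : ‖S‖ ≤ √2 * numRadius S := by
  set A : E →L[ℂ] E := ↑(ℜ S)
  set B : E →L[ℂ] E := ↑(ℑ S)
  set ω := √2 * numRadius S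
  have hω : 0 ≤ ω := by have := numRadius_nonneg S; positivity
  have hdiag (x : E) (hx : ‖x‖ = 1) : (⟪A x, x⟫_ℂ).re + (⟪B x, x⟫_ℂ).re ≤ ω :=
    calc (⟪A x, x⟫_ℂ).re + (⟪B x, x⟫_ℂ).re = (⟪S x, x⟫_ℂ).re - (⟪S x, x⟫_ℂ).im := by
          rw [re_inner_realPart_apply_self, re_inner_imaginaryPart_apply_self]; ring
      _ ≤ √2 * ‖⟪S x, x⟫_ℂ‖ := Complex.re_sub_im_le_sqrt_two_mul_norm _
      _ ≤ ω :=
          mul_le_mul_of_nonneg_left (norm_inner_apply_self_le_numRadius S hx) (Real.sqrt_nonneg 2)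
  refine opNorm_le_of_re_inner_le hω fun x y hx hy => ?_
  calc (⟪S x, y⟫_ℂ).re ≤ ‖⟪S x, y⟫_ℂ‖ := Complex.re_le_norm _
    _ ≤ ‖⟪A x, y⟫_ℂ‖ + ‖⟪B x, y⟫_ℂ‖ := by
        have hSx : S x = A x + Complex.I • B x := by
          conv_lhs => rw [← realPart_add_I_smul_imaginaryPart S]
          rfl
        rw [hSx, inner_add_left, inner_smul_left]
        refine (norm_add_le _ _).trans_eq ?_
        simp
    _ ≤ √(⟪A x, x⟫_ℂ).re * √(⟪A y, y⟫_ℂ).re + √(⟪B x, x⟫_ℂ).re * √(⟪B y, y⟫_ℂ).re :=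
        add_le_add (hre.norm_inner_le_sqrt_mul_sqrt x y) (him.norm_inner_le_sqrt_mul_sqrt x y)
    _ ≤ √((⟪A x, x⟫_ℂ).re + (⟪B x, x⟫_ℂ).re) * √((⟪A y, y⟫_ℂ).re + (⟪B y, y⟫_ℂ).re) :=
        Real.sqrt_mul_sqrt_add_sqrt_mul_sqrt_le (hre.re_inner_nonneg_left x)
          (hre.re_inner_nonneg_left y) (him.re_inner_nonneg_left x) (him.re_inner_nonneg_left y)
    _ ≤ √ω * √ω := by gcongr; exacts [hdiag x hx, hdiag y hy]
    _ = ω := Real.mul_self_sqrt hω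

end

theorem stmt_12 (S T : H →L[ℂ] H)
    (h : ((reP S).IsPositive ∧ (imP S).IsPositive) ∨ ((reP T).IsPositive ∧ (imP T).IsPositive)) :
    numRadius (S * T) ≤ 2 * Real.sqrt 2 * numRadius S * numRadius T := by
  simp only [reP_eq_realPart, imP_eq_imaginaryPart] at h
  have hS := numRadius_nonneg S
  have hT := numRadius_nonneg T
  calc numRadius (S * T) ≤ ‖S‖ * ‖T‖ := (numRadius_le_norm _).trans (norm_mul_le S T)
    _ ≤ 2 * √2 * numRadius S * numRadius T := by
      rcases h with ⟨hre, him⟩ | ⟨hre, him⟩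
      · grw [norm_le_sqrt_two_mul_numRadius hre him, norm_le_two_mul_numRadius T]
        linarith
      · grw [norm_le_two_mul_numRadius S, norm_le_sqrt_two_mul_numRadius hre him]
        linarith
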